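/- arXiv:2301.11546 — 3 statements merged into one kernel-verified Lean document; each statement's English description precedes it below -/
import Mathlib

section
/- Let Q ⊆ ℝ^d be closed convex, 0 ≤ μ < 1, and let the sequence {x_t} satisfy the heavy-ball projected iteration x_{t+1} = P_Q[x_t + α g_t + μ(x_t − x_{t−1})] interpreted via the variational inequality ⟨x_{t+1} − x_t − μ(x_t − x_{t−1}) − α g_t, x_{t+1} − u⟩ ≤ 0 for all u ∈ Q. Define p_t = (μ/(1−μ))(x_t − x_{t−1}). Then ⟨x_{t+1} + p_{t+1} − (x_t + p_t) − (α/(1−μ)) g_t, x_{t+1} + p_t' − u⟩ ≤ 0 for all u ∈ Q where p_t' = p_{t+1}, i.e., x_{t+1} + p_{t+1} = P_Q[x_t + p_t + (α/(1−μ)) g_t]. -/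
open RealInnerProductSpace

/-- Projected heavy-ball reformulation: if `x₁ = P_Q[x₀ + α g + μ(x₀ − xm)]`
(expressed via the variational inequality), then with `p = (μ/(1−μ))(x₀ − xm)`
and `p₁ = (μ/(1−μ))(x₁ − x₀)` the shifted point satisfies
`x₁ + p₁ = P_Q[x₀ + p + (α/(1−μ)) g]` (again via the variational inequality). -/
theorem stmt_2 {d : ℕ} (Q : Set (EuclideanSpace ℝ (Fin d)))
    (hQne : Q.Nonempty) (hQcl : IsClosed Q) (hQcv : Convex ℝ Q)
    (xm x₀ x₁ g : EuclideanSpace ℝ (Fin d))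
    (hxm : xm ∈ Q) (hx₀ : x₀ ∈ Q) (hx₁ : x₁ ∈ Q)
    (α μ : ℝ) (hα : 0 < α) (hμ0 : 0 ≤ μ) (hμ1 : μ < 1)
    (hvi : ∀ u ∈ Q, ⟪x₁ - x₀ - μ • (x₀ - xm) - α • g, x₁ - u⟫ ≤ 0) :
    ∀ u ∈ Q,
      ⟪(x₁ + (μ / (1 - μ)) • (x₁ - x₀)) - (x₀ + (μ / (1 - μ)) • (x₀ - xm))
          - (α / (1 - μ)) • g,
        (x₁ + (μ / (1 - μ)) • (x₁ - x₀)) - u⟫ ≤ 0 := by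
  intro u hu
  have hpos : (0:ℝ) < 1 - μ := by linarith
  set v := x₁ - x₀ - μ • (x₀ - xm) - α • g with hv
  set c := μ / (1 - μ) with hc
  have hcnn : 0 ≤ c := div_nonneg hμ0 hpos.le
  have hvec : (x₁ + c • (x₁ - x₀)) - (x₀ + c • (x₀ - xm)) - (α / (1 - μ)) • g
      = (1 / (1 - μ)) • v := by
    rw [hv, hc]
    match_scalars <;> field_simp <;> ring
  have harg : (x₁ + c • (x₁ - x₀)) - u = (x₁ - u) + c • (x₁ - x₀) := by
    abel
  rw [hvec, harg, inner_smul_left, inner_add_right, inner_smul_right]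
  have h1 := hvi u hu
  have h2 := hvi x₀ hx₀
  have : ⟪v, x₁ - u⟫ + c * ⟪v, x₁ - x₀⟫ ≤ 0 := by
    nlinarith [mul_nonneg hcnn (neg_nonneg.mpr h2)]
  have hcoef : (0:ℝ) ≤ 1 / (1 - μ) := by positivity
  calc (starRingEnd ℝ) (1 / (1 - μ)) * (⟪v, x₁ - u⟫ + c * ⟪v, x₁ - x₀⟫)
      = (1 / (1 - μ)) * (⟪v, x₁ - u⟫ + c * ⟪v, x₁ - x₀⟫) := by simp
    _ ≤ 0 := mul_nonpos_of_nonneg_of_nonpos hcoef this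
end

section
/- (Convergence of MI-FGM with constant step-size) Let J : ℝ^d → ℝ be concave differentiable with ‖∇J(x)‖ ≤ G on a bounded closed convex set Q, let x* maximize J over Q, let 0 ≤ μ < 1, and let {x_t} ⊆ Q be generated by x_{t+1} = P_Q[x_t + α g_t + μ(x_t − x_{t−1})] with g_t = ∇J(x_t), x_0 = x_{−1} ∈ Q, and constant step-size α = C/√T for some C > 0. Suppose ‖x* − (x_t + p_t)‖² ≤ M for all t where p_t = (μ/(1−μ))(x_t − x_{t−1}). Then J(x*) − J((1/T)∑_{t=1}^{T} x_t) ≤ (μ/((1−μ)T))(J(x_T) − J(x_0)) + ((1−μ)M)/(2C√T) + (C G²)/(2(1−μ)√T). -/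
open RealInnerProductSpace Finset

/-!
The shifted iterates `y_t = x_t + p_t` perform projected gradient ascent with step
`η = α / (1 - μ)`. For a comparison point `z ∈ Q` the point `s = (1 - μ) z + μ x_t` lies in `Q`,
and `s - x_{t+1} = (1 - μ) (z - y_{t+1})` while `s - (x_t + α g_t + μ (x_t - x_{t-1}))` is
`(1 - μ) (z - y_t - η g_t)`; since projecting onto `Q` moves a point closer to `s`,
`‖z - y_{t+1}‖ ≤ ‖z - y_t - η g_t‖`. Expanding the square gives
`2η⟪g_t, z - y_t⟫ ≤ ‖z - y_t‖² - ‖z - y_{t+1}‖² + η²G²`, which telescopes. Concavity turns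
`⟪g_t, z - y_t⟫` into `J z - J x_t` up to the telescoping term `μ/(1-μ) (J x_t - J x_{t-1})`, and
Jensen's inequality passes to the averaged iterate.
-/

theorem ConcaveOn.le_add_of_hasFDerivAt {E : Type*} [NormedAddCommGroup E] [NormedSpace ℝ E]
    {s : Set E} {J : E → ℝ} {J' : E →L[ℝ] ℝ} {x y : E} (hJ : ConcaveOn ℝ s J) (hx : x ∈ s)
    (hy : y ∈ s) (hJ' : HasFDerivAt J J' x) : J y ≤ J x + J' (y - x) := by
  let φ : ℝ → E := AffineMap.lineMap x y
  have hline : ConcaveOn ℝ (φ ⁻¹' s) (J ∘ φ) := hJ.comp_affineMap _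
  have hderiv : HasDerivAt (J ∘ φ) (J' (y - x)) 0 := by
    simpa using hJ'.comp_hasDerivAt_of_eq (0 : ℝ) AffineMap.hasDerivAt_lineMap (by simp)
  have h := hline.slope_le_of_hasDerivAt (x := 0) (y := 1) (by simpa [φ]) (by simpa [φ]) one_pos
    hderiv
  simp only [slope_def_field, Function.comp_apply, φ, AffineMap.lineMap_apply_zero,
    AffineMap.lineMap_apply_one, sub_zero, div_one] at h
  linarith

theorem ConcaveOn.le_add_inner_gradient {E : Type*} [NormedAddCommGroup E] [InnerProductSpace ℝ E]
    [CompleteSpace E] {s : Set E} {J : E → ℝ} {x y : E} (hJ : ConcaveOn ℝ s J) (hx : x ∈ s)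
    (hy : y ∈ s) (hd : DifferentiableAt ℝ J x) : J y ≤ J x + ⟪gradient J x, y - x⟫ := by
  simpa using hJ.le_add_of_hasFDerivAt hx hy hd.hasGradientAt.hasFDerivAt

theorem Convex.norm_sub_le_of_forall_dist_le {E : Type*} [NormedAddCommGroup E]
    [InnerProductSpace ℝ E] {Q : Set E} (hQ : Convex ℝ Q) {w v s : E} (hv : v ∈ Q)
    (hmin : ∀ u ∈ Q, dist w v ≤ dist w u) (hs : s ∈ Q) : ‖s - v‖ ≤ ‖s - w‖ := by
  have : Nonempty Q := ⟨⟨v, hv⟩⟩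
  have hinf : ‖w - v‖ = ⨅ u : Q, ‖w - u‖ :=
    le_antisymm (le_ciInf fun u => by simpa [dist_eq_norm] using hmin u u.2)
      (ciInf_le ⟨0, by rintro _ ⟨u, rfl⟩; positivity⟩ (⟨v, hv⟩ : Q))
  have hvar : ⟪w - v, s - v⟫ ≤ 0 := (norm_eq_iInf_iff_real_inner_le_zero hQ hv).mp hinf s hs
  have hexpand : ‖s - w‖ ^ 2 = ‖s - v‖ ^ 2 - 2 * ⟪s - v, w - v⟫ + ‖w - v‖ ^ 2 := by
    rw [← norm_sub_sq_real, sub_sub_sub_cancel_right]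
  rw [real_inner_comm] at hexpand
  refine pow_le_pow_iff_left₀ (norm_nonneg _) (norm_nonneg _) two_ne_zero |>.mp ?_
  nlinarith [sq_nonneg ‖w - v‖]

theorem two_mul_inner_add_norm_sub_smul_sq {E : Type*} [NormedAddCommGroup E]
    [InnerProductSpace ℝ E] (v g : E) (η : ℝ) :
    2 * η * ⟪g, v⟫ + ‖v - η • g‖ ^ 2 = ‖v‖ ^ 2 + η ^ 2 * ‖g‖ ^ 2 := by
  rw [norm_sub_sq_real, real_inner_smul_right, norm_smul, mul_pow, Real.norm_eq_abs, sq_abs,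
    real_inner_comm]
  ring

theorem Finset.sum_Icc_one_sub_pred {M : Type*} [AddCommGroup M] (f : ℕ → M) (T : ℕ) :
    ∑ t ∈ Icc 1 T, (f t - f (t - 1)) = f T - f 0 := by
  induction T with
  | zero => simp
  | succ n ih =>
    rw [sum_Icc_succ_top (by omega), ih, Nat.add_sub_cancel]
    abel

theorem Finset.sum_Icc_one_le_of_le_sub_succ {a b : ℕ → ℝ} {c : ℝ} {T : ℕ} (hT : 1 ≤ T)
    (hstep : ∀ t ∈ Ico 1 T, a t ≤ b t - b (t + 1) + c) (hlast : a T ≤ b T + c) :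
    ∑ t ∈ Icc 1 T, a t ≤ b 1 + T * c := by
  obtain ⟨n, rfl⟩ : ∃ n, T = n + 1 := ⟨T - 1, by omega⟩
  have hsum : ∑ t ∈ Ico 1 (n + 1), a t ≤ b 1 - b (n + 1) + n * c := by
    calc ∑ t ∈ Ico 1 (n + 1), a t ≤ ∑ t ∈ Ico 1 (n + 1), (c - (b (t + 1) - b t)) :=
          sum_le_sum fun t ht => by linarith [hstep t ht]
      _ = b 1 - b (n + 1) + n * c := by
          rw [sum_sub_distrib, sum_Ico_sub _ (by omega), sum_const, Nat.card_Ico, nsmul_eq_mul,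
            Nat.add_sub_cancel]
          ring
  rw [← Ico_add_one_right_eq_Icc, sum_Ico_succ_top (by omega)]
  push_cast
  linarith

theorem ConcaveOn.inv_card_mul_sum_le {E : Type*} [AddCommGroup E] [Module ℝ E] {s : Set E}
    {J : E → ℝ} (hJ : ConcaveOn ℝ s J) {ι : Type*} {t : Finset ι} (ht : t.Nonempty) {p : ι → E}
    (hp : ∀ i ∈ t, p i ∈ s) :
    (#t : ℝ)⁻¹ * ∑ i ∈ t, J (p i) ≤ J ((#t : ℝ)⁻¹ • ∑ i ∈ t, p i) := by
  have hcard : (#t : ℝ) ≠ 0 := by exact_mod_cast ht.card_ne_zero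
  simpa [mul_sum, smul_sum, hcard] using
    hJ.le_map_sum (w := fun _ => (#t : ℝ)⁻¹) (fun _ _ => by positivity) (by simp [hcard]) hp

section Momentum

variable {E : Type*} [NormedAddCommGroup E] [InnerProductSpace ℝ E]

/-- The paper's `x_t + p_t`, with `p_t = (μ / (1 - μ)) (x_t - x_{t-1})`. -/
noncomputable def momentumPoint (μ : ℝ) (x x' : E) : E := x + (μ / (1 - μ)) • (x - x')

theorem norm_sub_momentumPoint_le {Q : Set E} (hQ : Convex ℝ Q) {z x x₀ x₁ g : E} {μ α : ℝ}
    (hz : z ∈ Q) (hx : x ∈ Q) (hx₁ : x₁ ∈ Q) (hμ0 : 0 ≤ μ) (hμ1 : μ < 1)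
    (hmin : ∀ u ∈ Q, dist (x + α • g + μ • (x - x₀)) x₁ ≤ dist (x + α • g + μ • (x - x₀)) u) :
    ‖z - momentumPoint μ x₁ x‖ ≤ ‖z - momentumPoint μ x x₀ - (α / (1 - μ)) • g‖ := by
  have h1μ : 0 < 1 - μ := by linarith
  have hs : (1 - μ) • z + μ • x ∈ Q := hQ hz hx h1μ.le hμ0 (by ring)
  have hproj := hQ.norm_sub_le_of_forall_dist_le hx₁ hmin hs
  have hμ : (1 - μ) * (μ / (1 - μ)) = μ := by field_simp
  have hα : (1 - μ) * (α / (1 - μ)) = α := by field_simp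
  have hleft : (1 - μ) • z + μ • x - x₁ = (1 - μ) • (z - momentumPoint μ x₁ x) := by
    simp only [momentumPoint, smul_sub, smul_add, smul_smul, hμ, sub_smul, one_smul]
    abel
  have hright : (1 - μ) • z + μ • x - (x + α • g + μ • (x - x₀)) =
      (1 - μ) • (z - momentumPoint μ x x₀ - (α / (1 - μ)) • g) := by
    simp only [momentumPoint, smul_sub, smul_add, smul_smul, hμ, hα, sub_smul, one_smul]
    abel
  rw [hleft, hright, norm_smul, norm_smul, Real.norm_of_nonneg h1μ.le] at hproj
  exact le_of_mul_le_mul_left hproj h1μ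

theorem ConcaveOn.sub_sub_mul_le_inner_momentumPoint [CompleteSpace E] {Q : Set E}
    {J : E → ℝ} (hJ : ConcaveOn ℝ Q J) {z x x' : E} {μ : ℝ} (hz : z ∈ Q) (hx : x ∈ Q)
    (hx' : x' ∈ Q) (hd : DifferentiableAt ℝ J x) (hμ0 : 0 ≤ μ) (hμ1 : μ < 1) :
    J z - J x - μ / (1 - μ) * (J x - J x') ≤ ⟪gradient J x, z - momentumPoint μ x x'⟫ := by
  have hβ : 0 ≤ μ / (1 - μ) := div_nonneg hμ0 (by linarith)
  have hgrad_z := hJ.le_add_inner_gradient hx hz hd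
  have hgrad_x' := hJ.le_add_inner_gradient hx hx' hd
  have hsplit : ⟪gradient J x, z - momentumPoint μ x x'⟫ =
      ⟪gradient J x, z - x⟫ + μ / (1 - μ) * ⟪gradient J x, x' - x⟫ := by
    rw [momentumPoint, ← real_inner_smul_right, ← inner_add_right]
    congr 1
    rw [smul_sub, smul_sub]
    abel
  rw [hsplit]
  nlinarith

theorem sum_sub_le_of_momentum_iterates [CompleteSpace E] {Q : Set E} (hQ : Convex ℝ Q)
    {J : E → ℝ} (hJ : ConcaveOn ℝ Q J) (hd : ∀ y ∈ Q, DifferentiableAt ℝ J y) {G : ℝ}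
    (hG : ∀ y ∈ Q, ‖gradient J y‖ ≤ G) {z : E} (hz : z ∈ Q) {μ α M : ℝ} (hμ0 : 0 ≤ μ)
    (hμ1 : μ < 1) (hα : 0 < α) {T : ℕ} (hT : 1 ≤ T) {x : ℕ → E} (hx : ∀ t, x t ∈ Q)
    (hiter : ∀ t < T, ∀ u ∈ Q,
      dist (x t + α • gradient J (x t) + μ • (x t - x (t - 1))) (x (t + 1)) ≤
        dist (x t + α • gradient J (x t) + μ • (x t - x (t - 1))) u)
    (hM : ‖z - momentumPoint μ (x 1) (x 0)‖ ^ 2 ≤ M) :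
    ∑ t ∈ Icc 1 T, (J z - J (x t)) ≤
      μ / (1 - μ) * (J (x T) - J (x 0)) + (1 - μ) * M / (2 * α) +
        T * α * G ^ 2 / (2 * (1 - μ)) := by
  have h1μ : 0 < 1 - μ := by linarith
  set η := α / (1 - μ) with hη_def
  set v : ℕ → E := fun t => z - momentumPoint μ (x t) (x (t - 1))
  have hdescent : ∀ t, 2 * η * ⟪gradient J (x t), v t⟫ + ‖v t - η • gradient J (x t)‖ ^ 2 ≤
      ‖v t‖ ^ 2 + η ^ 2 * G ^ 2 := fun t => by
    rw [two_mul_inner_add_norm_sub_smul_sq]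
    gcongr
    exact hG _ (hx t)
  have hinner : ∑ t ∈ Icc 1 T, 2 * η * ⟪gradient J (x t), v t⟫ ≤ M + T * (η ^ 2 * G ^ 2) := by
    refine (sum_Icc_one_le_of_le_sub_succ (b := fun t => ‖v t‖ ^ 2) hT (fun t ht => ?_) ?_).trans
      (add_le_add_left hM _)
    · have hstep : ‖v (t + 1)‖ ≤ ‖v t - η • gradient J (x t)‖ :=
        norm_sub_momentumPoint_le hQ hz (hx t) (hx (t + 1)) hμ0 hμ1
          (hiter t (mem_Ico.mp ht).2)
      nlinarith [hdescent t, pow_le_pow_left₀ (norm_nonneg _) hstep 2]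
    · nlinarith [hdescent T, sq_nonneg ‖v T - η • gradient J (x T)‖]
  have hconcave : ∀ t, J z - J (x t) - μ / (1 - μ) * (J (x t) - J (x (t - 1))) ≤
      ⟪gradient J (x t), v t⟫ := fun t =>
    hJ.sub_sub_mul_le_inner_momentumPoint hz (hx t) (hx (t - 1)) (hd _ (hx t)) hμ0 hμ1
  have hsum : ∑ t ∈ Icc 1 T, (J z - J (x t)) ≤
      μ / (1 - μ) * (J (x T) - J (x 0)) + ∑ t ∈ Icc 1 T, ⟪gradient J (x t), v t⟫ := by
    rw [← sum_Icc_one_sub_pred (fun t => J (x t)), mul_sum, ← sub_le_iff_le_add',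
      ← sum_sub_distrib]
    exact sum_le_sum fun t _ => hconcave t
  rw [← mul_sum] at hinner
  have hη : 0 < η := div_pos hα h1μ
  have hinner' : ∑ t ∈ Icc 1 T, ⟪gradient J (x t), v t⟫ ≤
      (M + T * (η ^ 2 * G ^ 2)) / (2 * η) := by
    rw [le_div_iff₀ (by positivity)]
    linarith
  calc ∑ t ∈ Icc 1 T, (J z - J (x t))
      _ ≤ μ / (1 - μ) * (J (x T) - J (x 0)) + (M + T * (η ^ 2 * G ^ 2)) / (2 * η) := by linarith
      _ = _ := by rw [hη_def]; field_simp; ring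

end Momentum

theorem stmt_7_general {d : ℕ} (J : EuclideanSpace ℝ (Fin d) → ℝ)
    (hJ : ConcaveOn ℝ Set.univ J) (hdiff : Differentiable ℝ J)
    (Q : Set (EuclideanSpace ℝ (Fin d)))
    (hQcv : Convex ℝ Q)
    (G : ℝ) (hG : ∀ y ∈ Q, ‖gradient J y‖ ≤ G)
    (xs : EuclideanSpace ℝ (Fin d)) (hxs : xs ∈ Q)
    (μ : ℝ) (hμ0 : 0 ≤ μ) (hμ1 : μ < 1)
    (T : ℕ) (hT : 1 ≤ T) (C : ℝ) (hC : 0 < C)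
    (α : ℝ) (hαdef : α = C / Real.sqrt T)
    (x : ℕ → EuclideanSpace ℝ (Fin d)) (hxQ : ∀ t, x t ∈ Q)
    (g : ℕ → EuclideanSpace ℝ (Fin d)) (hg : ∀ t, g t = gradient J (x t))
    (hiter : ∀ t, t < T →
      ∀ u ∈ Q, dist (x t + α • g t + μ • (x t - x (t - 1))) (x (t + 1)) ≤
        dist (x t + α • g t + μ • (x t - x (t - 1))) u)
    (M : ℝ)
    (hM : ∀ t, t ≤ T + 1 →
      ‖xs - (x t + (μ / (1 - μ)) • (x t - x (t - 1)))‖ ^ 2 ≤ M) :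
    J xs - J ((T : ℝ)⁻¹ • ∑ t ∈ Icc 1 T, x t) ≤
      (μ / ((1 - μ) * T)) * (J (x T) - J (x 0))
        + (1 - μ) * M / (2 * C * Real.sqrt T)
        + C * G ^ 2 / (2 * (1 - μ) * Real.sqrt T) := by
  obtain rfl : g = fun t => gradient J (x t) := funext hg
  have hTpos : (0 : ℝ) < T := by exact_mod_cast hT
  have hJQ : ConcaveOn ℝ Q J := hJ.subset (Set.subset_univ Q) hQcv
  have hregret := sum_sub_le_of_momentum_iterates hQcv hJQ (fun y _ => hdiff y) hG hxs
    hμ0 hμ1 (by rw [hαdef]; positivity) hT hxQ hiter (hM 1 (by omega))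
  have hcard : (#(Icc 1 T) : ℝ) = T := by simp
  have hjensen := hJQ.inv_card_mul_sum_le (nonempty_Icc.mpr hT) (fun t _ => hxQ t)
  rw [hcard] at hjensen
  calc J xs - J ((T : ℝ)⁻¹ • ∑ t ∈ Icc 1 T, x t)
      _ ≤ (T : ℝ)⁻¹ * ∑ t ∈ Icc 1 T, (J xs - J (x t)) := by
        rw [sum_sub_distrib, sum_const, nsmul_eq_mul, hcard, mul_sub,
          inv_mul_cancel_left₀ hTpos.ne']
        linarith
      _ ≤ (T : ℝ)⁻¹ * (μ / (1 - μ) * (J (x T) - J (x 0)) + (1 - μ) * M / (2 * α) +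
            T * α * G ^ 2 / (2 * (1 - μ))) := by gcongr
      _ = _ := by
        have h1μ : 1 - μ ≠ 0 := by linarith
        have hsq := Real.sq_sqrt hTpos.le
        rw [hαdef]
        field_simp
        linear_combination (1 - μ) ^ 2 * M * hsq

/-- Convergence of MI-FGM with constant step-size `α = C/√T`: the averaged
iterate satisfies
`J(x*) − J(x̄_T) ≤ (μ/((1−μ)T))(J(x_T) − J(x_0)) + ((1−μ)M)/(2C√T) + CG²/(2(1−μ)√T)`.
The iteration `x_{t+1} = P_Q[x_t + α g_t + μ(x_t − x_{t−1})]` is expressed by the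
nearest-point property; indices are naturals, `x 0 = x₀ = x₋₁` (truncated
subtraction makes `x (0-1) = x 0`). -/
theorem stmt_7 {d : ℕ} (J : EuclideanSpace ℝ (Fin d) → ℝ)
    (hJ : ConcaveOn ℝ Set.univ J) (hdiff : Differentiable ℝ J)
    (Q : Set (EuclideanSpace ℝ (Fin d)))
    (hQb : Bornology.IsBounded Q) (hQcl : IsClosed Q) (hQcv : Convex ℝ Q)
    (G : ℝ) (hG : ∀ y ∈ Q, ‖gradient J y‖ ≤ G)
    (xs : EuclideanSpace ℝ (Fin d)) (hxs : xs ∈ Q) (hmax : ∀ y ∈ Q, J y ≤ J xs)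
    (μ : ℝ) (hμ0 : 0 ≤ μ) (hμ1 : μ < 1)
    (T : ℕ) (hT : 1 ≤ T) (C : ℝ) (hC : 0 < C)
    (α : ℝ) (hαdef : α = C / Real.sqrt T)
    (x : ℕ → EuclideanSpace ℝ (Fin d)) (hxQ : ∀ t, x t ∈ Q)
    (g : ℕ → EuclideanSpace ℝ (Fin d)) (hg : ∀ t, g t = gradient J (x t))
    (hiter : ∀ t, t < T →
      ∀ u ∈ Q, dist (x t + α • g t + μ • (x t - x (t - 1))) (x (t + 1)) ≤
        dist (x t + α • g t + μ • (x t - x (t - 1))) u)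
    (M : ℝ)
    (hM : ∀ t, t ≤ T + 1 →
      ‖xs - (x t + (μ / (1 - μ)) • (x t - x (t - 1)))‖ ^ 2 ≤ M) :
    J xs - J ((T : ℝ)⁻¹ • ∑ t ∈ Icc 1 T, x t) ≤
      (μ / ((1 - μ) * T)) * (J (x T) - J (x 0))
        + (1 - μ) * M / (2 * C * Real.sqrt T)
        + C * G ^ 2 / (2 * (1 - μ) * Real.sqrt T) :=
  stmt_7_general J hJ hdiff Q hQcv G hG xs hxs μ hμ0 hμ1 T hT C hC α hαdef x hxQ g hg hiter M hM
end

section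
/- (Mukkamala–Hein adaptive sum bound) Let g_{t,i} be reals for t = 1,…,T and i = 1,…,d, let δ > 0, let 0 < γ ≤ 1, and let β_t satisfy 1 − 1/t ≤ β_t ≤ 1 − γ/t for all t ≥ 1. Define v_{0,i} = 0 and v_{t,i} = β_t v_{t−1,i} + (1−β_t) g_{t,i}². Then ∑_{i=1}^{d} ∑_{t=1}^{T} g_{t,i}² / (√(t v_{t,i}) + δ) ≤ ∑_{i=1}^{d} (2(2−γ)/γ)(√(T v_{T,i}) + δ). -/
/-!
Fix a coordinate and put `a_t = t v_t`. The two bounds on `β_t` say exactly that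
`t β_t ≥ t - 1` and `t (1 - β_t) ≥ γ`, so `a_t - a_{t-1} ≥ γ g_t²`: the weighted
second moment grows by at least a `γ`-fraction of each new squared gradient. Then
`g_t² / (√a_t + δ) ≤ (a_t - a_{t-1}) / (γ (√a_t + δ)) ≤ (2/γ) (√a_t - √a_{t-1})`,
and the sum telescopes to `(2/γ) √a_T`.
-/

open Finset

namespace AdaptiveSum

lemma sub_div_sqrt_add_le {a b δ : ℝ} (ha : 0 ≤ a) (hab : a ≤ b) (hδ : 0 < δ) :
    (b - a) / (√b + δ) ≤ 2 * (√b - √a) := by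
  have hsqrt : √a ≤ √b := Real.sqrt_le_sqrt hab
  have hfactor : b - a = (√b - √a) * (√b + √a) := by
    rw [mul_comm, ← mul_self_sub_mul_self, Real.mul_self_sqrt (ha.trans hab),
      Real.mul_self_sqrt ha]
  rw [div_le_iff₀ (by positivity), hfactor]
  nlinarith [mul_nonneg (sub_nonneg.2 hsqrt) hδ.le, Real.sqrt_nonneg a]

lemma sum_Icc_div_sqrt_add_le {a x : ℕ → ℝ} {γ δ : ℝ} (hγ : 0 < γ) (hδ : 0 < δ)
    (ha0 : a 0 = 0) (hx : ∀ t, 0 ≤ x t) (hinc : ∀ t, γ * x (t + 1) ≤ a (t + 1) - a t)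
    (T : ℕ) : ∑ t ∈ Icc 1 T, x t / (√(a t) + δ) ≤ 2 / γ * √(a T) := by
  have hmono : Monotone a :=
    monotone_nat_of_le_succ fun t => by nlinarith [hinc t, hx (t + 1)]
  have hnonneg : ∀ t, 0 ≤ a t := fun t => ha0 ▸ hmono (Nat.zero_le t)
  have hstep : ∀ t, x (t + 1) / (√(a (t + 1)) + δ) ≤ 2 / γ * (√(a (t + 1)) - √(a t)) := by
    intro t
    calc x (t + 1) / (√(a (t + 1)) + δ)
        ≤ (a (t + 1) - a t) / γ / (√(a (t + 1)) + δ) := by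
          gcongr
          rw [le_div_iff₀ hγ]
          linarith [hinc t]
      _ = (a (t + 1) - a t) / (√(a (t + 1)) + δ) / γ := div_right_comm _ _ _
      _ ≤ 2 * (√(a (t + 1)) - √(a t)) / γ := by
          gcongr
          exact sub_div_sqrt_add_le (hnonneg t) (hmono t.le_succ) hδ
      _ = 2 / γ * (√(a (t + 1)) - √(a t)) := by ring
  induction T with
  | zero => simp [ha0]
  | succ T ih =>
    rw [sum_Icc_succ_top (Nat.le_add_left 1 T)]
    linarith [hstep T]

lemma ema_step_weighted_increment {t β γ vp w : ℝ} (ht : 0 < t) (hlo : 1 - 1 / t ≤ β)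
    (hhi : β ≤ 1 - γ / t) (hvp : 0 ≤ vp) (hw : 0 ≤ w) :
    γ * w ≤ t * (β * vp + (1 - β) * w) - (t - 1) * vp := by
  have hβ : t - 1 ≤ t * β := by
    have := mul_le_mul_of_nonneg_left hlo ht.le
    rwa [mul_sub, mul_one, mul_one_div_cancel ht.ne'] at this
  have hγ : γ ≤ t * (1 - β) := by
    have := mul_le_mul_of_nonneg_left (le_sub_comm.1 hhi) ht.le
    rwa [mul_div_cancel₀ _ ht.ne'] at this
  nlinarith [mul_le_mul_of_nonneg_right hβ hvp, mul_le_mul_of_nonneg_right hγ hw]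

lemma ema_nonneg_and_weighted_increment {γ : ℝ} {β : ℕ → ℝ} {u w : ℕ → ℝ} (hγ : 0 ≤ γ)
    (hβ : ∀ t : ℕ, 1 ≤ t → 1 - 1 / (t : ℝ) ≤ β t ∧ β t ≤ 1 - γ / (t : ℝ))
    (hu0 : u 0 = 0) (hu : ∀ t, 1 ≤ t → u t = β t * u (t - 1) + (1 - β t) * w t ^ 2)
    (n : ℕ) : 0 ≤ u n ∧ γ * w (n + 1) ^ 2 ≤ (n + 1 : ℕ) * u (n + 1) - n * u n := by
  have hinc : ∀ k, 0 ≤ u k → γ * w (k + 1) ^ 2 ≤ (k + 1 : ℕ) * u (k + 1) - k * u k := by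
    intro k hk
    obtain ⟨hlo, hhi⟩ := hβ (k + 1) (Nat.le_add_left 1 k)
    have := ema_step_weighted_increment (by positivity) hlo hhi hk (sq_nonneg (w (k + 1)))
    rw [hu (k + 1) (Nat.le_add_left 1 k), k.add_sub_cancel]
    push_cast at this ⊢
    linarith
  induction n with
  | zero => exact ⟨hu0.ge, hinc 0 hu0.ge⟩
  | succ n ih =>
    have hpos : (0 : ℝ) < (n + 1 : ℕ) := by positivity
    have hnext : 0 ≤ u (n + 1) := by
      refine nonneg_of_mul_nonneg_right ?_ hpos
      linarith [ih.2, mul_nonneg n.cast_nonneg' ih.1, mul_nonneg hγ (sq_nonneg (w (n + 1)))]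
    exact ⟨hnext, hinc (n + 1) hnext⟩

end AdaptiveSum

open AdaptiveSum in
/-- Mukkamala–Hein adaptive sum bound: for the EMA recursion
`v_{t,i} = β_t v_{t−1,i} + (1−β_t) g_{t,i}²` with `1 − 1/t ≤ β_t ≤ 1 − γ/t`,
`∑_i ∑_{t=1}^T g_{t,i}²/(√(t v_{t,i}) + δ) ≤ ∑_i (2(2−γ)/γ)(√(T v_{T,i}) + δ)`. -/
theorem stmt_8 (d T : ℕ) (g : ℕ → ℕ → ℝ) (δ γ : ℝ) (hδ : 0 < δ)
    (hγ0 : 0 < γ) (hγ1 : γ ≤ 1)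
    (β : ℕ → ℝ)
    (hβ : ∀ t : ℕ, 1 ≤ t → 1 - 1 / (t : ℝ) ≤ β t ∧ β t ≤ 1 - γ / (t : ℝ))
    (v : ℕ → ℕ → ℝ) (hv0 : ∀ i, v 0 i = 0)
    (hv : ∀ t, 1 ≤ t → ∀ i, v t i = β t * v (t - 1) i + (1 - β t) * (g t i) ^ 2) :
    ∑ i ∈ range d, ∑ t ∈ Icc 1 T,
        (g t i) ^ 2 / (Real.sqrt (t * v t i) + δ) ≤
      ∑ i ∈ range d, (2 * (2 - γ) / γ) * (Real.sqrt (T * v T i) + δ) := by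
  refine sum_le_sum fun i _ => ?_
  have hinc (n : ℕ) : γ * g (n + 1) i ^ 2 ≤ (n + 1 : ℕ) * v (n + 1) i - n * v n i :=
    (ema_nonneg_and_weighted_increment hγ0.le hβ (hv0 i) (fun t ht => hv t ht i) n).2
  calc ∑ t ∈ Icc 1 T, g t i ^ 2 / (√(t * v t i) + δ)
      ≤ 2 / γ * √(T * v T i) :=
        sum_Icc_div_sqrt_add_le (a := fun t => t * v t i) hγ0 hδ (by simp)
          (fun t => sq_nonneg _) hinc T
    _ ≤ 2 * (2 - γ) / γ * √(T * v T i) := by gcongr; linarith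
    _ ≤ 2 * (2 - γ) / γ * (√(T * v T i) + δ) :=
        mul_le_mul_of_nonneg_left (by linarith) (div_nonneg (by linarith) hγ0.le)
end
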